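/- Under the same setting, a single backward step gives: if ‖V^π_{t+1,M} − V^π_{t+1,M'}‖_∞ ≤ B and the next-step values are bounded by (T−1)·C_max, then |V^π_{t,M}(h_t) − V^π_{t,M'}(h_t)| ≤ C_max·ε + B + (T−1)·C_max·ε = T·C_max·ε + B for every history h_t. -/
import Mathlib


open Finset

/-- The history-dependent value function with `k` steps remaining, defined by backward
recursion (see the history-dependent simulation lemma). -/
noncomputable def histValue {S A C : Type} [Fintype S] [Fintype A] [Fintype C]
    (P : S → A → C × S → ℝ) (cost : C → ℝ)
    (π : List (S × A × C) × S → A) : ℕ → List (S × A × C) × S → ℝ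
  | 0, _ => 0
  | k + 1, (hist, s) =>
      ∑ x : C × S, P s (π (hist, s)) x *
        (cost x.1 + histValue P cost π k (hist ++ [(s, π (hist, s), x.1)], x.2))

lemma histValue_nonneg {S A C : Type} [Fintype S] [Fintype A] [Fintype C]
    (P : S → A → C × S → ℝ) (cost : C → ℝ) (π : List (S × A × C) × S → A)
    (hP : ∀ s a x, 0 ≤ P s a x) (hc : ∀ c, 0 ≤ cost c) :
    ∀ k h, 0 ≤ histValue P cost π k h := by
  intro k
  induction k with
  | zero => intro h; simp [histValue]
  | succ k ih =>
    rintro ⟨hist, s⟩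
    simp only [histValue]
    apply Finset.sum_nonneg
    intro x _
    exact mul_nonneg (hP _ _ _) (add_nonneg (hc _) (ih _))

/-- single backward step of the simulation lemma: if the next-step value
functions (with `k` steps remaining) differ by at most `B` on all histories and are bounded
by `(T−1)·C_max`, then after one backward step the values (with `k+1` steps remaining) differ
by at most `C_max·ε + B + (T−1)·C_max·ε = T·C_max·ε + B`. -/
theorem stmt_8 {S A C : Type} [Fintype S] [Fintype A] [Fintype C] [Nonempty S] [Nonempty A]
    (P P' : S → A → C × S → ℝ) (cost : C → ℝ) (Cmax ε B : ℝ) (T k : ℕ)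
    (π : List (S × A × C) × S → A)
    (hP_nonneg : ∀ s a x, 0 ≤ P s a x) (hP'_nonneg : ∀ s a x, 0 ≤ P' s a x)
    (hP_sum : ∀ s a, ∑ x : C × S, P s a x = 1)
    (hP'_sum : ∀ s a, ∑ x : C × S, P' s a x = 1)
    (hcost_nonneg : ∀ c, 0 ≤ cost c) (hcost_le : ∀ c, cost c ≤ Cmax)
    (hε : 0 ≤ ε) (hCmax : 0 ≤ Cmax) (hB : 0 ≤ B) (hT : 1 ≤ T)
    (htv : ∀ s a, ∑ x : C × S, |P s a x - P' s a x| ≤ ε)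
    (hnext_close : ∀ h : List (S × A × C) × S,
      |histValue P cost π k h - histValue P' cost π k h| ≤ B)
    (hnext_bdd : ∀ h : List (S × A × C) × S,
      histValue P' cost π k h ≤ ((T : ℝ) - 1) * Cmax) :
    ∀ h : List (S × A × C) × S,
      |histValue P cost π (k + 1) h - histValue P' cost π (k + 1) h| ≤
        (T : ℝ) * Cmax * ε + B := by
  rintro ⟨hist, s⟩
  set a := π (hist, s) with ha
  simp only [histValue]
  set Vk : C × S → ℝ := fun x => histValue P cost π k (hist ++ [(s, a, x.1)], x.2) with hVk
  set Vk' : C × S → ℝ := fun x => histValue P' cost π k (hist ++ [(s, a, x.1)], x.2) with hVk'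
  have key : ∑ x : C × S, P s a x * (cost x.1 + Vk x) - ∑ x : C × S, P' s a x * (cost x.1 + Vk' x)
      = (∑ x : C × S, (P s a x - P' s a x) * (cost x.1 + Vk' x))
        + ∑ x : C × S, P s a x * (Vk x - Vk' x) := by
    rw [← Finset.sum_add_distrib, ← Finset.sum_sub_distrib]
    apply Finset.sum_congr rfl
    intro x _
    ring
  rw [key]
  have h1 : |∑ x : C × S, (P s a x - P' s a x) * (cost x.1 + Vk' x)| ≤ (T : ℝ) * Cmax * ε := by
    calc |∑ x : C × S, (P s a x - P' s a x) * (cost x.1 + Vk' x)|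
        ≤ ∑ x : C × S, |(P s a x - P' s a x) * (cost x.1 + Vk' x)| := Finset.abs_sum_le_sum_abs _ _
      _ ≤ ∑ x : C × S, |P s a x - P' s a x| * ((T : ℝ) * Cmax) := by
          apply Finset.sum_le_sum
          intro x _
          rw [abs_mul]
          apply mul_le_mul_of_nonneg_left _ (abs_nonneg _)
          have h0 : 0 ≤ Vk' x := histValue_nonneg P' cost π hP'_nonneg hcost_nonneg k _
          rw [abs_of_nonneg (add_nonneg (hcost_nonneg _) h0)]
          have : Vk' x ≤ ((T : ℝ) - 1) * Cmax := hnext_bdd _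
          have hc := hcost_le x.1
          nlinarith
      _ = (∑ x : C × S, |P s a x - P' s a x|) * ((T : ℝ) * Cmax) := by
          rw [← Finset.sum_mul]
      _ ≤ ε * ((T : ℝ) * Cmax) := by
          apply mul_le_mul_of_nonneg_right (htv s a)
          positivity
      _ = (T : ℝ) * Cmax * ε := by ring
  have h2 : |∑ x : C × S, P s a x * (Vk x - Vk' x)| ≤ B := by
    calc |∑ x : C × S, P s a x * (Vk x - Vk' x)|
        ≤ ∑ x : C × S, |P s a x * (Vk x - Vk' x)| := Finset.abs_sum_le_sum_abs _ _
      _ ≤ ∑ x : C × S, P s a x * B := by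
          apply Finset.sum_le_sum
          intro x _
          rw [abs_mul, abs_of_nonneg (hP_nonneg s a x)]
          exact mul_le_mul_of_nonneg_left (hnext_close _) (hP_nonneg s a x)
      _ = (∑ x : C × S, P s a x) * B := by rw [← Finset.sum_mul]
      _ = B := by rw [hP_sum s a, one_mul]
  calc |(∑ x : C × S, (P s a x - P' s a x) * (cost x.1 + Vk' x))
        + ∑ x : C × S, P s a x * (Vk x - Vk' x)|
      ≤ |∑ x : C × S, (P s a x - P' s a x) * (cost x.1 + Vk' x)|
        + |∑ x : C × S, P s a x * (Vk x - Vk' x)| := abs_add_le _ _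
    _ ≤ (T : ℝ) * Cmax * ε + B := add_le_add h1 h2
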